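/- arXiv:1405.6315 — 10 statements merged into one kernel-verified Lean document; each statement's English description precedes it below -/
import Mathlib

section
/- For all nonnegative integers m and n, the super Catalan number S(m,n) = (2m)!(2n)!/(m!·n!·(m+n)!) is an integer. -/
/-!
By Legendre's formula, `v_p(N!) = ∑_{i ≥ 1} ⌊N / p^i⌋`, so it suffices to prove
`⌊m/k⌋ + ⌊n/k⌋ + ⌊(m+n)/k⌋ ≤ ⌊2m/k⌋ + ⌊2n/k⌋` for every modulus `k`. Writing `r`, `t` for the
remainders of `m`, `n` mod `k`, the carries compare as `[k ≤ r + t] ≤ [k ≤ 2r] + [k ≤ 2t]`,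
which holds because `r + t ≥ k` forces `2r ≥ k` or `2t ≥ k`.
-/

open Finset Nat

theorem Nat.div_add_div_add_add_div_le (m n k : ℕ) :
    m / k + n / k + (m + n) / k ≤ 2 * m / k + 2 * n / k := by
  rcases k.eq_zero_or_pos with rfl | hk
  · simp
  rw [two_mul, two_mul, Nat.add_div hk, Nat.add_div hk, Nat.add_div hk]
  split_ifs <;> omega

theorem Nat.factorization_factorial_mul_factorial {p : ℕ} (hp : p.Prime) {a b c : ℕ}
    (ha : log p a < c) (hb : log p b < c) :
    (a ! * b !).factorization p = ∑ i ∈ Ico 1 c, (a / p ^ i + b / p ^ i) := by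
  rw [factorization_mul (factorial_ne_zero a) (factorial_ne_zero b), Finsupp.add_apply,
    factorization_factorial hp ha, factorization_factorial hp hb, sum_add_distrib]

theorem superCatalan_integer (m n : ℕ) :
    (Nat.factorial m * Nat.factorial n * Nat.factorial (m + n)) ∣
      Nat.factorial (2 * m) * Nat.factorial (2 * n) := by
  refine (factorization_prime_le_iff_dvd (by positivity) (by positivity)).1 fun p hp => ?_
  let c := log p (2 * m + 2 * n) + 1
  have hlog (x : ℕ) (hx : x ≤ 2 * m + 2 * n) : log p x < c :=
    lt_succ_of_le (log_mono_right hx)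
  rw [Nat.factorization_mul (by positivity) (factorial_ne_zero _), Finsupp.add_apply,
    factorization_factorial_mul_factorial hp (hlog m (by omega)) (hlog n (by omega)),
    factorization_factorial_mul_factorial hp (hlog _ (by omega)) (hlog _ (by omega)),
    factorization_factorial hp (hlog _ (by omega)), ← sum_add_distrib]
  exact sum_le_sum fun i _ => div_add_div_add_add_div_le m n (p ^ i)
end

section
/- Von Szily identity: for all nonnegative integers m and n, S(m,n) = Σ_{k∈ℤ} (-1)^k · C(2m, m+k) · C(2n, n-k), where S(m,n) = (2m)!(2n)!/(m!·n!·(m+n)!). -/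
/-!
Both sides satisfy `S(m + 1, n) + S(m, n + 1) = 4 S(m, n)` and equal `C(2n, n)` at `m = 0`.
For the alternating sum `T(a, b; p, q) = ∑ₖ (-1)^k C(a, p + k) C(b, q - k)`, expanding
`C(2m + 2, ·)` and `C(2n + 2, ·)` twice by Pascal's rule gives `4 T(2m, 2n; m, n)` plus four
shifted sums, which cancel in pairs because the reindexing `k ↦ k + 1` gives
`T(a, b; p, q + 1) = -T(a, b; p + 1, q)`.
-/

/-- Binomial coefficient `C(a, b)` for an integer lower index, zero when `b < 0`. -/
def chooseZ (a : ℕ) (b : ℤ) : ℕ := if 0 ≤ b then a.choose b.toNat else 0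

lemma chooseZ_eq_zero_of_notMem {a : ℕ} {b : ℤ} (h : b ∉ Set.Icc 0 (a : ℤ)) :
    chooseZ a b = 0 := by
  rw [Set.mem_Icc, not_and_or, not_le, not_le] at h
  unfold chooseZ
  split_ifs with hb
  · exact Nat.choose_eq_zero_of_lt (by omega)
  · rfl

lemma chooseZ_succ (a : ℕ) (b : ℤ) : chooseZ (a + 1) b = chooseZ a (b - 1) + chooseZ a b := by
  unfold chooseZ
  rcases lt_trichotomy b 0 with hb | rfl | hb
  · rw [if_neg (by omega), if_neg (by omega), if_neg (by omega)]
  · simp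
  · rw [if_pos (by omega), if_pos (by omega), if_pos (by omega),
      show b.toNat = (b - 1).toNat + 1 by omega, Nat.choose_succ_succ']

lemma chooseZ_zero_left (b : ℤ) : chooseZ 0 b = if b = 0 then 1 else 0 := by
  unfold chooseZ
  split_ifs with hb hb0 <;> try rfl
  · simp [show b.toNat = 0 by omega]
  · exact Nat.choose_eq_zero_of_lt (by omega)
  · omega

lemma chooseZ_natCast (a b : ℕ) : chooseZ a b = a.choose b := by
  simp [chooseZ]

section SzilySum

variable (a b : ℕ) (p q : ℤ)

def szilyTerm (k : ℤ) : ℚ := (-1) ^ k * chooseZ a (p + k) * chooseZ b (q - k)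

noncomputable def szilySum : ℚ := ∑ᶠ k : ℤ, szilyTerm a b p q k

lemma hasFiniteSupport_szilyTerm : (szilyTerm a b p q).HasFiniteSupport := by
  refine (Set.finite_Icc (-p) (a - p)).subset fun k hk => ?_
  by_contra hout
  apply hk
  rw [szilyTerm, chooseZ_eq_zero_of_notMem (by rw [Set.mem_Icc] at hout ⊢; omega)]
  simp

lemma szilyTerm_succ_left (k : ℤ) :
    szilyTerm (a + 1) b p q k = szilyTerm a b (p - 1) q k + szilyTerm a b p q k := by
  simp only [szilyTerm, chooseZ_succ, Nat.cast_add, show p - 1 + k = p + k - 1 by ring]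
  ring

lemma szilyTerm_succ_right (k : ℤ) :
    szilyTerm a (b + 1) p q k = szilyTerm a b p (q - 1) k + szilyTerm a b p q k := by
  simp only [szilyTerm, chooseZ_succ, Nat.cast_add, show q - 1 - k = q - k - 1 by ring]
  ring

lemma szilySum_succ_left :
    szilySum (a + 1) b p q = szilySum a b (p - 1) q + szilySum a b p q := by
  rw [szilySum, finsum_congr (szilyTerm_succ_left a b p q),
    finsum_add_distrib (hasFiniteSupport_szilyTerm ..) (hasFiniteSupport_szilyTerm ..)]
  rfl

lemma szilySum_succ_right :
    szilySum a (b + 1) p q = szilySum a b p (q - 1) + szilySum a b p q := by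
  rw [szilySum, finsum_congr (szilyTerm_succ_right a b p q),
    finsum_add_distrib (hasFiniteSupport_szilyTerm ..) (hasFiniteSupport_szilyTerm ..)]
  rfl

lemma szilySum_shift : szilySum a b p (q + 1) = -szilySum a b (p + 1) q := by
  have hterm (k : ℤ) : szilyTerm a b p (q + 1) (k + 1) = -szilyTerm a b (p + 1) q k := by
    simp only [szilyTerm, zpow_add_one₀ (show (-1 : ℚ) ≠ 0 by norm_num),
      show p + (k + 1) = p + 1 + k by ring, show q + 1 - (k + 1) = q - k by ring]
    ring
  rw [szilySum, ← finsum_comp_equiv (Equiv.addRight 1)]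
  simp only [Equiv.coe_addRight, hterm, finsum_neg_distrib]
  rfl

lemma szilySum_zero_left : szilySum 0 b 0 q = chooseZ b q := by
  rw [szilySum, finsum_eq_single _ 0 fun k hk => by simp [szilyTerm, chooseZ_zero_left, hk]]
  simp [szilyTerm, chooseZ_zero_left]

end SzilySum

lemma szilySum_diagonal_rec (m n : ℕ) :
    szilySum (2 * (m + 1)) (2 * n) (m + 1 : ℕ) n + szilySum (2 * m) (2 * (n + 1)) m (n + 1 : ℕ) =
      4 * szilySum (2 * m) (2 * n) m n := by
  have hm : 2 * (m + 1) = 2 * m + 1 + 1 := by ring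
  have hn : 2 * (n + 1) = 2 * n + 1 + 1 := by ring
  have hshift₁ := szilySum_shift (2 * m) (2 * n) m n
  have hshift₂ := szilySum_shift (2 * m) (2 * n) (m - 1) (n - 1)
  simp only [hm, hn, szilySum_succ_left, szilySum_succ_right, Nat.cast_add, Nat.cast_one,
    add_sub_cancel_right, sub_add_cancel] at hshift₁ hshift₂ ⊢
  linarith

def superCatalan (m n : ℕ) : ℚ :=
  (Nat.factorial (2 * m) * Nat.factorial (2 * n)) /
    (Nat.factorial m * Nat.factorial n * Nat.factorial (m + n))

lemma superCatalan_rec (m n : ℕ) :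
    superCatalan (m + 1) n + superCatalan m (n + 1) = 4 * superCatalan m n := by
  rw [superCatalan, superCatalan, superCatalan, show 2 * (m + 1) = 2 * m + 1 + 1 by ring,
    show 2 * (n + 1) = 2 * n + 1 + 1 by ring, show m + 1 + n = m + n + 1 by ring,
    show m + (n + 1) = m + n + 1 by ring]
  simp only [Nat.factorial_succ]
  push_cast
  field_simp
  ring

lemma superCatalan_zero_left (n : ℕ) : superCatalan 0 n = (2 * n).choose n := by
  rw [superCatalan, Nat.cast_choose ℚ (by omega : n ≤ 2 * n), show 2 * n - n = n by omega]
  simp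

lemma superCatalan_eq_szilySum (m n : ℕ) :
    superCatalan m n = szilySum (2 * m) (2 * n) m n := by
  induction m generalizing n with
  | zero => simp [superCatalan_zero_left, szilySum_zero_left, chooseZ_natCast]
  | succ m ih =>
    have hS := superCatalan_rec m n
    have hT := szilySum_diagonal_rec m n
    linarith [ih n, ih (n + 1)]

theorem von_szily (m n : ℕ) :
    ((Nat.factorial (2 * m) * Nat.factorial (2 * n) : ℚ)) /
      (Nat.factorial m * Nat.factorial n * Nat.factorial (m + n)) =
    ∑ᶠ k : ℤ, ((-1 : ℚ) ^ k) * (chooseZ (2 * m) (m + k) : ℚ) * (chooseZ (2 * n) (n - k) : ℚ) :=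
  superCatalan_eq_szilySum m n
end

section
/- The n×n super Catalan matrix S has the factorization S = L·D·Lᵀ, where L(m,k) = C(2m, m+k), D is diagonal with D(0,0) = 1 and D(m,m) = (-1)^m·2 for m > 0, and S(i,j) = (2i)!(2j)!/(i!·j!·(i+j)!), matrices over ℚ (or ℤ) indexed by 0 ≤ i,j,k < n. -/
/-! Both `S i j` and the entries of `L D Lᵀ` satisfy `f (i+1) j + f i (j+1) = 4 f i j` and agree
at `i = 0`, where both equal `C(2j, j)`. For `L D Lᵀ` this comes from
`C(2m+2, m+1+k) = C(2m, m+k-1) + 2 C(2m, m+k) + C(2m, m+k+1)`, read at `k = 0` through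
`C(2m, m-1) = C(2m, m+1)`: substituting it, the alternating signs of `D` make the defect
telescope down to a boundary term, which vanishes once the sum runs past the support of row `i`. -/

open Finset Nat
open scoped Matrix

namespace SuperCatalan

noncomputable def superCatalan (i j : ℕ) : ℚ :=
  ((2 * i)! * (2 * j)! : ℚ) / (i ! * j ! * (i + j)!)

def lowerEntry (m k : ℕ) : ℚ := (2 * m).choose (m + k)

def diagEntry (k : ℕ) : ℚ := if k = 0 then 1 else (-1) ^ k * 2

def ldlEntry (i j n : ℕ) : ℚ := ∑ k ∈ range n, lowerEntry i k * diagEntry k * lowerEntry j k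

theorem _root_.Nat.choose_add_two_add_two (n k : ℕ) :
    (n + 2).choose (k + 2) = n.choose k + 2 * n.choose (k + 1) + n.choose (k + 2) := by
  rw [Nat.choose_succ_succ', Nat.choose_succ_succ' n, Nat.choose_succ_succ' n]
  ring

theorem lowerEntry_eq_zero {m k : ℕ} (h : m < k) : lowerEntry m k = 0 := by
  simp [lowerEntry, Nat.choose_eq_zero_of_lt (show 2 * m < m + k by omega)]

theorem lowerEntry_succ_succ (m k : ℕ) :
    lowerEntry (m + 1) (k + 1) =
      lowerEntry m k + 2 * lowerEntry m (k + 1) + lowerEntry m (k + 2) := by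
  have h := Nat.choose_add_two_add_two (2 * m) (m + k)
  rw [lowerEntry, lowerEntry, lowerEntry, lowerEntry, show 2 * (m + 1) = 2 * m + 2 by ring,
    show m + 1 + (k + 1) = m + k + 2 by ring, ← add_assoc, ← add_assoc]
  exact_mod_cast h

theorem lowerEntry_succ_zero (m : ℕ) :
    lowerEntry (m + 1) 0 = 2 * lowerEntry m 0 + 2 * lowerEntry m 1 := by
  have h : (2 * m + 2).choose (m + 1) = 2 * (2 * m).choose m + 2 * (2 * m).choose (m + 1) := by
    rw [Nat.choose_succ_succ', ← Nat.choose_symm_half, Nat.choose_succ_succ']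
    ring
  simp only [lowerEntry, show 2 * (m + 1) = 2 * m + 2 by ring, add_zero]
  rw [h]
  push_cast
  ring

theorem ldlEntry_recurrence_defect (i j n : ℕ) :
    ldlEntry (i + 1) j (n + 1) + ldlEntry i (j + 1) (n + 1) - 4 * ldlEntry i j (n + 1) =
      2 * (-1) ^ n *
        (lowerEntry i n * lowerEntry j (n + 1) + lowerEntry i (n + 1) * lowerEntry j n) := by
  induction n with
  | zero =>
    simp only [ldlEntry, zero_add, sum_range_one, diagEntry, if_pos, lowerEntry_succ_zero]
    ring
  | succ n ih =>
    simp only [ldlEntry] at ih ⊢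
    rw [sum_range_succ _ (n + 1), sum_range_succ _ (n + 1), sum_range_succ _ (n + 1),
      lowerEntry_succ_succ, lowerEntry_succ_succ, diagEntry, if_neg n.succ_ne_zero]
    linear_combination ih

theorem ldlEntry_succ_add_succ {i n : ℕ} (j : ℕ) (h : i < n) :
    ldlEntry (i + 1) j (n + 1) + ldlEntry i (j + 1) (n + 1) = 4 * ldlEntry i j (n + 1) := by
  have defect := ldlEntry_recurrence_defect i j n
  rw [lowerEntry_eq_zero h, lowerEntry_eq_zero (h.trans n.lt_succ_self)] at defect
  linear_combination defect

theorem ldlEntry_zero_left (j n : ℕ) : ldlEntry 0 j (n + 1) = lowerEntry j 0 := by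
  rw [ldlEntry, sum_range_succ']
  simp [lowerEntry, diagEntry]

theorem superCatalan_zero_left (j : ℕ) : superCatalan 0 j = lowerEntry j 0 := by
  rw [superCatalan, lowerEntry, add_zero, Nat.cast_choose ℚ (by omega : j ≤ 2 * j),
    show 2 * j - j = j by omega]
  simp

theorem superCatalan_succ_add_succ (i j : ℕ) :
    superCatalan (i + 1) j + superCatalan i (j + 1) = 4 * superCatalan i j := by
  simp only [superCatalan, show 2 * (i + 1) = 2 * i + 1 + 1 by ring,
    show 2 * (j + 1) = 2 * j + 1 + 1 by ring, show i + 1 + j = i + j + 1 by ring,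
    ← add_assoc, Nat.factorial_succ]
  push_cast
  field_simp
  ring

theorem ldlEntry_eq_superCatalan {i n : ℕ} (j : ℕ) (h : i < n) :
    ldlEntry i j n = superCatalan i j := by
  obtain ⟨n, rfl⟩ : ∃ m, n = m + 1 := ⟨n - 1, by omega⟩
  induction i generalizing j with
  | zero => rw [ldlEntry_zero_left, superCatalan_zero_left]
  | succ i ih =>
    have hL := ldlEntry_succ_add_succ j (show i < n by omega)
    have hS := superCatalan_succ_add_succ i j
    rw [ih j (by omega), ih (j + 1) (by omega)] at hL
    linear_combination hL - hS

end SuperCatalan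

namespace Matrix

theorem mul_diagonal_mul_transpose_apply {ι κ R : Type*} [Fintype κ] [DecidableEq κ]
    [NonUnitalNonAssocSemiring R] (A B : Matrix ι κ R) (d : κ → R) (i j : ι) :
    (A * diagonal d * Bᵀ) i j = ∑ k, A i k * d k * B j k := by
  rw [mul_apply]
  simp only [mul_diagonal, transpose_apply]

end Matrix

open SuperCatalan in
theorem superCatalan_eq_LDLt (n : ℕ) :
    (Matrix.of fun i j : Fin n =>
        ((Nat.factorial (2 * (i : ℕ)) * Nat.factorial (2 * (j : ℕ)) : ℚ)) /
          (Nat.factorial (i : ℕ) * Nat.factorial (j : ℕ) * Nat.factorial ((i : ℕ) + (j : ℕ)))) =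
    (Matrix.of fun m k : Fin n => ((Nat.choose (2 * (m : ℕ)) ((m : ℕ) + (k : ℕ)) : ℚ))) *
      (Matrix.diagonal fun m : Fin n =>
        if (m : ℕ) = 0 then (1 : ℚ) else (-1) ^ (m : ℕ) * 2) *
      Matrix.transpose (Matrix.of fun m k : Fin n => ((Nat.choose (2 * (m : ℕ)) ((m : ℕ) + (k : ℕ)) : ℚ))) := by
  ext i j
  rw [Matrix.mul_diagonal_mul_transpose_apply]
  exact (ldlEntry_eq_superCatalan j i.isLt).symm.trans
    (Fin.sum_univ_eq_sum_range (fun k => lowerEntry i k * diagEntry k * lowerEntry j k) n).symm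
end

section
/- Let L be the n×n integer matrix with L(m,k) = C(2m, m+k). Then L is invertible over ℤ, and the entries of column 0 of L⁻¹ satisfy: L⁻¹(0,0) = 1 and L⁻¹(i,0) is even for all 0 < i < n. -/
/-!
Since `C(2m, m+k) = 0` for `k > m` and `C(2m, 2m) = 1`, the matrix `L` is lower unitriangular,
so `det L = 1`. Its row `0` is the unit vector `e₀`, hence so is row `0` of `L⁻¹`. Its column `0`
consists of the central binomial coefficients, which are even except `C(0, 0) = 1`, so modulo `2`
column `0` of `L` is `e₀`, and therefore so is column `0` of `L⁻¹`.
-/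

namespace Matrix

variable {ι R : Type*} [Fintype ι] [DecidableEq ι] [Semiring R] {A B : Matrix ι ι R}

theorem col_eq_single_of_mul_eq_one (h : B * A = 1) {j : ι} (hA : A.col j = Pi.single j 1) :
    B.col j = Pi.single j 1 := by
  calc B.col j = B *ᵥ (A *ᵥ Pi.single j 1) := by rw [mulVec_single_one A, hA, mulVec_single_one]
    _ = Pi.single j 1 := by rw [mulVec_mulVec, h, one_mulVec]

theorem row_eq_single_of_mul_eq_one (h : A * B = 1) {i : ι} (hA : A.row i = Pi.single i 1) :
    B.row i = Pi.single i 1 := by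
  calc B.row i = Pi.single i 1 ᵥ* A ᵥ* B := by rw [single_one_vecMul i A, hA, single_one_vecMul]
    _ = Pi.single i 1 := by rw [vecMul_vecMul, h, vecMul_one]

end Matrix

open Matrix

def chooseMatrix (n : ℕ) : Matrix (Fin n) (Fin n) ℤ :=
  Matrix.of fun m k : Fin n => ((Nat.choose (2 * (m : ℕ)) ((m : ℕ) + (k : ℕ)) : ℤ))

namespace chooseMatrix

variable {n : ℕ}

theorem isLowerTriangular : (chooseMatrix n).IsLowerTriangular := fun m k (hmk : m < k) => by
  simp [chooseMatrix, Nat.choose_eq_zero_of_lt (show 2 * (m : ℕ) < m + k by omega)]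

theorem det_eq_one : (chooseMatrix n).det = 1 := by
  rw [det_of_isLowerTriangular _ isLowerTriangular]
  simp [chooseMatrix, ← two_mul]

variable [NeZero n]

theorem row_zero : (chooseMatrix n).row 0 = Pi.single 0 1 := by
  ext k
  rcases eq_or_ne k 0 with rfl | hk
  · simp [chooseMatrix]
  · simp [chooseMatrix, hk,
      Nat.choose_eq_zero_of_lt (Nat.pos_of_ne_zero (Fin.val_ne_zero_iff.mpr hk))]

theorem map_intCast_col_zero :
    ((chooseMatrix n).map (Int.castRingHom (ZMod 2))).col 0 = Pi.single 0 1 := by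
  ext m
  rcases eq_or_ne m 0 with rfl | hm
  · simp [chooseMatrix]
  · have h2 : 2 ∣ (2 * (m : ℕ)).choose m := Nat.centralBinom_eq_two_mul_choose m ▸
      Nat.two_dvd_centralBinom_of_one_le (Nat.pos_of_ne_zero (Fin.val_ne_zero_iff.mpr hm))
    simp [chooseMatrix, hm, (ZMod.natCast_eq_zero_iff _ 2).mpr h2]

end chooseMatrix

theorem L_inv_column_zero (n : ℕ) (hn : 0 < n) :
    IsUnit (Matrix.of fun m k : Fin n =>
        ((Nat.choose (2 * (m : ℕ)) ((m : ℕ) + (k : ℕ)) : ℤ))).det ∧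
    (Matrix.of fun m k : Fin n =>
        ((Nat.choose (2 * (m : ℕ)) ((m : ℕ) + (k : ℕ)) : ℤ)))⁻¹ ⟨0, hn⟩ ⟨0, hn⟩ = 1 ∧
    ∀ i : Fin n, 0 < (i : ℕ) →
      2 ∣ (Matrix.of fun m k : Fin n =>
        ((Nat.choose (2 * (m : ℕ)) ((m : ℕ) + (k : ℕ)) : ℤ)))⁻¹ i ⟨0, hn⟩ := by
  have : NeZero n := ⟨hn.ne'⟩
  change IsUnit (chooseMatrix n).det ∧ (chooseMatrix n)⁻¹ 0 0 = 1 ∧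
    ∀ i : Fin n, 0 < (i : ℕ) → 2 ∣ (chooseMatrix n)⁻¹ i 0
  have hunit : IsUnit (chooseMatrix n).det := chooseMatrix.det_eq_one ▸ isUnit_one
  refine ⟨hunit, ?_, fun i hi => ?_⟩
  · simpa using congrFun
      (row_eq_single_of_mul_eq_one (mul_nonsing_inv _ hunit) chooseMatrix.row_zero) 0
  · have hmod : ((chooseMatrix n)⁻¹.map (Int.castRingHom (ZMod 2))).col 0 = Pi.single 0 1 :=
      col_eq_single_of_mul_eq_one
        (by rw [← Matrix.map_mul, nonsing_inv_mul _ hunit,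
          Matrix.map_one _ (map_zero _) (map_one _)])
        chooseMatrix.map_intCast_col_zero
    have hi0 : i ≠ 0 := Fin.val_ne_zero_iff.mp hi.ne'
    simpa [hi0, ZMod.intCast_zmod_eq_zero_iff_dvd] using congrFun hmod i
end

section
/- The n×n reciprocal Pascal matrix R, with entries R(i,j) = 1/C(i+j,i) over ℚ, is invertible, and every entry of R⁻¹ is an integer. -/
/-!
Let `L k j = (-1)^j C(k,j) C(k+j-1,j)`, a lower triangular integer matrix. Chu–Vandermonde at the
negative upper index `-k` (where `C(-k,j) = (-1)^j C(k+j-1,j)`) gives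
`(R Lᵀ) i k = C(i,k) / C(i+k,k)`, which is again lower triangular. Hence `L R Lᵀ` is lower
triangular and symmetric, so diagonal, and its diagonal `1, -1/2, 1/2, -1/2, …` is inverted by
the integer diagonal `D = diag(1, -2, 2, -2, …)`. Thus `L R Lᵀ D = 1`, and `R⁻¹ = Lᵀ D L` has
integer entries.
-/

open Finset Matrix

theorem sum_neg_one_pow_mul_choose_mul_choose_eq (i k : ℕ) :
    ∑ j ∈ range (k + 1), (-1 : ℤ) ^ j * ((k + j - 1).choose j * (i + k).choose (k - j) : ℕ) =
      i.choose k := by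
  have h := Ring.add_choose_eq (r := -(k : ℤ)) (s := ((i + k : ℕ) : ℤ)) k (Commute.all _ _)
  rw [show -(k : ℤ) + ((i + k : ℕ) : ℤ) = (i : ℤ) by push_cast; ring, Ring.choose_natCast,
    Nat.sum_antidiagonal_eq_sum_range_succ (fun a b => Ring.choose (-(k : ℤ)) a *
      Ring.choose ((i + k : ℕ) : ℤ) b)] at h
  rw [h]
  refine sum_congr rfl fun j _ => ?_
  have multichoose_eq : Ring.multichoose (k : ℤ) j = ((k + j - 1).choose j : ℕ) := rfl
  rw [Ring.choose_neg', Ring.choose_natCast, Int.negOnePow_def, multichoose_eq, zpow_natCast,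
    Units.smul_def]
  push_cast
  ring

theorem Nat.choose_mul_add_choose_eq {i j k : ℕ} (h : j ≤ k) :
    k.choose j * (i + k).choose k = (i + k).choose (k - j) * (i + j).choose i := by
  have := Nat.choose_mul (n := i + k) (Nat.sub_le k j)
  rw [Nat.choose_symm h, show i + k - (k - j) = i + j by omega,
    show k - (k - j) = j by omega] at this
  rw [mul_comm, this, Nat.choose_symm_add]

theorem Nat.two_mul_choose_two_mul_sub_one {k : ℕ} (hk : 0 < k) :
    2 * (2 * k - 1).choose k = (2 * k).choose k := by
  obtain ⟨m, rfl⟩ := Nat.exists_eq_add_of_lt hk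
  rw [show 2 * (0 + m + 1) - 1 = 2 * m + 1 by omega, show 2 * (0 + m + 1) = 2 * m + 1 + 1 by omega,
    zero_add, Nat.choose_succ_succ (2 * m + 1) m, Nat.choose_symm_half]
  ring

namespace ReciprocalPascal

def lowerEntry (k j : ℕ) : ℤ := (-1) ^ j * (k.choose j * (k + j - 1).choose j : ℕ)

def weight (k : ℕ) : ℤ := if k = 0 then 1 else 2 * (-1) ^ k

theorem lowerEntry_eq_zero_of_lt {k j : ℕ} (h : k < j) : lowerEntry k j = 0 := by
  simp [lowerEntry, Nat.choose_eq_zero_of_lt h]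

theorem lowerEntry_div_choose {i j k : ℕ} (h : j ≤ k) :
    (lowerEntry k j : ℚ) / (i + j).choose i =
      (-1) ^ j * ((k + j - 1).choose j * (i + k).choose (k - j) : ℕ) / (i + k).choose k := by
  have key : (k.choose j * (i + k).choose k : ℚ) = (i + k).choose (k - j) * (i + j).choose i := by
    exact_mod_cast Nat.choose_mul_add_choose_eq h
  rw [div_eq_div_iff (Nat.cast_ne_zero.2 (Nat.choose_pos (by omega)).ne')
    (Nat.cast_ne_zero.2 (Nat.choose_pos (by omega)).ne'), lowerEntry]
  push_cast
  linear_combination (-1) ^ j * ((k + j - 1).choose j : ℚ) * key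

theorem sum_lowerEntry_div_choose (i k : ℕ) :
    ∑ j ∈ range (k + 1), (lowerEntry k j : ℚ) / (i + j).choose i =
      (i.choose k : ℚ) / (i + k).choose k := by
  rw [sum_congr rfl fun j hj => lowerEntry_div_choose (Nat.lt_succ_iff.mp (mem_range.mp hj)),
    ← sum_div]
  congr 1
  exact_mod_cast sum_neg_one_pow_mul_choose_mul_choose_eq i k

theorem lowerEntry_self_mul_weight (k : ℕ) :
    (lowerEntry k k : ℚ) / (k + k).choose k * weight k = 1 := by
  rcases Nat.eq_zero_or_pos k with rfl | hk
  · simp [lowerEntry, weight]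
  · have central : (2 * (2 * k - 1).choose k : ℚ) = (2 * k).choose k := by
      exact_mod_cast Nat.two_mul_choose_two_mul_sub_one hk
    have hc : ((2 * k - 1).choose k : ℚ) ≠ 0 := Nat.cast_ne_zero.2 (Nat.choose_pos (by omega)).ne'
    rw [lowerEntry, weight, if_neg hk.ne', Nat.choose_self, ← two_mul, ← central]
    push_cast
    field_simp
    rw [← pow_mul, pow_mul', neg_one_sq, one_pow]

variable (n : ℕ)

def matrix : Matrix (Fin n) (Fin n) ℚ :=
  of fun i j => 1 / ((i : ℕ) + (j : ℕ)).choose i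

def lowerMatrix : Matrix (Fin n) (Fin n) ℤ := of fun k j => lowerEntry k j

def weightMatrix : Matrix (Fin n) (Fin n) ℤ := diagonal fun k => weight k

theorem matrix_transpose : (matrix n)ᵀ = matrix n := by
  ext i j
  rw [transpose_apply, matrix, of_apply, of_apply, add_comm, Nat.choose_symm_add]

theorem matrix_mul_lowerMatrix_transpose :
    matrix n * ((lowerMatrix n).map (↑))ᵀ =
      of fun i k : Fin n => ((i : ℕ).choose k : ℚ) / ((i : ℕ) + k).choose k := by
  ext i k
  rw [mul_apply, of_apply, ← sum_lowerEntry_div_choose]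
  simp only [matrix, lowerMatrix, transpose_apply, map_apply, of_apply, one_div_mul_eq_div]
  rw [Fin.sum_univ_eq_sum_range (fun j => (lowerEntry k j : ℚ) / ((i : ℕ) + j).choose i)]
  refine (sum_subset (range_subset_range.2 k.isLt) fun j _ hj => ?_).symm
  rw [lowerEntry_eq_zero_of_lt (by simpa using hj), Int.cast_zero, zero_div]

theorem lowerMatrix_mul_matrix_mul_transpose_mul_weightMatrix :
    (lowerMatrix n).map (↑) * matrix n * ((lowerMatrix n).map (↑))ᵀ *
      (weightMatrix n).map (↑) = (1 : Matrix (Fin n) (Fin n) ℚ) := by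
  set L : Matrix (Fin n) (Fin n) ℚ := (lowerMatrix n).map (↑)
  set M := L * matrix n * Lᵀ with hM
  have hL : ∀ k j : Fin n, L k j = lowerEntry k j := fun _ _ => rfl
  have lower : ∀ a b : Fin n, a < b → M a b = 0 := by
    intro a b hab
    rw [hM, Matrix.mul_assoc, matrix_mul_lowerMatrix_transpose, mul_apply]
    refine sum_eq_zero fun j _ => ?_
    rcases lt_or_ge a j with haj | hja
    · rw [hL, lowerEntry_eq_zero_of_lt haj, Int.cast_zero, zero_mul]
    · rw [of_apply, Nat.choose_eq_zero_of_lt (hja.trans_lt hab), Nat.cast_zero, zero_div, mul_zero]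
  have symm : Mᵀ = M := by
    rw [hM, transpose_mul, transpose_mul, transpose_transpose, matrix_transpose, Matrix.mul_assoc]
  have diag : ∀ k : Fin n, M k k * weight k = 1 := by
    intro k
    rw [hM, Matrix.mul_assoc, matrix_mul_lowerMatrix_transpose, mul_apply, sum_eq_single k]
    · rw [hL, of_apply, Nat.choose_self, Nat.cast_one, mul_one_div]
      exact lowerEntry_self_mul_weight k
    · intro j _ hjk
      rcases lt_or_gt_of_ne hjk with hjk | hkj
      · rw [of_apply, Nat.choose_eq_zero_of_lt hjk, Nat.cast_zero, zero_div, mul_zero]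
      · rw [hL, lowerEntry_eq_zero_of_lt hkj, Int.cast_zero, zero_mul]
    · simp
  ext a b
  rw [weightMatrix, diagonal_map Int.cast_zero, mul_diagonal, one_apply]
  rcases lt_trichotomy a b with hab | rfl | hab
  · rw [lower a b hab, zero_mul, if_neg hab.ne]
  · rw [if_pos rfl]; exact diag a
  · rw [← symm, transpose_apply, lower b a hab, zero_mul, if_neg hab.ne']

theorem matrix_mul_eq_one :
    matrix n * ((lowerMatrix n)ᵀ * weightMatrix n * lowerMatrix n).map (↑) = 1 := by
  have h := lowerMatrix_mul_matrix_mul_transpose_mul_weightMatrix n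
  simp only [Matrix.mul_assoc] at h
  have map_mul : ∀ A B : Matrix (Fin n) (Fin n) ℤ,
      (A * B).map (↑) = A.map (↑) * B.map (Int.cast : ℤ → ℚ) :=
    fun _ _ => Matrix.map_mul (f := Int.castRingHom ℚ)
  rw [map_mul, map_mul, transpose_map]
  simpa only [Matrix.mul_assoc] using mul_eq_one_comm.mp h

end ReciprocalPascal

theorem reciprocalPascal_inv_integer (n : ℕ) :
    IsUnit (Matrix.of fun i j : Fin n =>
        (1 : ℚ) / (Nat.choose ((i : ℕ) + (j : ℕ)) (i : ℕ))).det ∧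
    ∀ i j : Fin n, ∃ z : ℤ,
      (Matrix.of fun i j : Fin n =>
        (1 : ℚ) / (Nat.choose ((i : ℕ) + (j : ℕ)) (i : ℕ)))⁻¹ i j = (z : ℚ) := by
  change IsUnit (ReciprocalPascal.matrix n).det ∧
    ∀ i j, ∃ z : ℤ, (ReciprocalPascal.matrix n)⁻¹ i j = z
  have h := ReciprocalPascal.matrix_mul_eq_one n
  exact ⟨isUnit_det_of_right_inverse h, fun i j => ⟨_, by rw [inv_eq_right_inv h]; rfl⟩⟩
end

section
/- The n×n reciprocal Pascal matrix R = G⁻¹·L·D·Lᵀ·G⁻¹, where R(i,j) = 1/C(i+j,i), G is diagonal with G(m,m) = C(2m,m), L(m,k) = C(2m,m+k), and D is diagonal with D(0,0)=1 and D(m,m)=(-1)^m·2 for m>0, all over ℚ. -/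
/-!
With `N = i + j`, entry `(i, j)` of the right-hand side is
`∑ₖ Dₖ C(2i, i+k) C(2j, j+k) / (C(2i, i) C(2j, j))`. Expanding into factorials, the ratio
`C(2i, i+k) C(2j, j+k) / (C(2i, i) C(2j, j))` equals `C(N, i+k) C(N, j+k) / (C(N, i) C(N, j))`,
and `C(N, j+k) = C(N, i-k)`. Unfolding the weights `Dₖ` over `r = i ± k`, the sum
`∑ₖ Dₖ C(N, i+k) C(N, i-k)` is `(-1)^i` times the coefficient of `x^{2i}` in
`(1 - x)^N (1 + x)^N = (1 - x²)^N`, i.e. `C(N, i)`. So the entry is `C(N, i) / (C(N, i) C(N, j))`,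
which is `1 / C(N, i)`.
-/

open Polynomial Finset

namespace Polynomial

lemma coeff_one_sub_X_pow {R : Type*} [CommRing R] (N r : ℕ) :
    ((1 - X : R[X]) ^ N).coeff r = (-1) ^ r * N.choose r := by
  induction N generalizing r with
  | zero => cases r <;> simp [coeff_one]
  | succ N ih =>
    rw [pow_succ', sub_mul, one_mul, coeff_sub]
    cases r with
    | zero => simp [ih]
    | succ r =>
      rw [coeff_X_mul, ih, ih, Nat.choose_succ_succ]
      push_cast
      ring

lemma coeff_one_sub_X_sq_pow_two_mul {R : Type*} [CommRing R] (N i : ℕ) :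
    ((1 - X ^ 2 : R[X]) ^ N).coeff (2 * i) = (-1) ^ i * N.choose i := by
  have h : (1 - X ^ 2 : R[X]) ^ N = expand R 2 ((1 - X) ^ N) := by
    rw [map_pow, map_sub, map_one, expand_X]
  rw [h, coeff_expand two_pos, if_pos (dvd_mul_right 2 i), Nat.mul_div_cancel_left i two_pos,
    coeff_one_sub_X_pow]

end Polynomial

lemma sum_range_neg_one_pow_mul_choose_mul_choose {R : Type*} [CommRing R] (N i : ℕ) :
    ∑ r ∈ range (2 * i + 1), (-1 : R) ^ r * N.choose r * N.choose (2 * i - r)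
      = (-1) ^ i * N.choose i := by
  have h : ((1 - X : R[X]) ^ N * (1 + X) ^ N).coeff (2 * i) = (-1 : R) ^ i * N.choose i := by
    rw [← mul_pow, show (1 - X : R[X]) * (1 + X) = 1 - X ^ 2 by ring,
      coeff_one_sub_X_sq_pow_two_mul]
  rw [← h, coeff_mul, Nat.sum_antidiagonal_eq_sum_range_succ_mk]
  simp only [coeff_one_sub_X_pow, coeff_one_add_X_pow]

lemma Finset.sum_range_two_mul_add_one_of_symm {M : Type*} [AddCommMonoid M] (f : ℕ → M)
    (i : ℕ) (hf : ∀ k ≤ i, f (i - k) = f (i + k)) :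
    ∑ r ∈ range (2 * i + 1), f r = f i + 2 • ∑ k ∈ range i, f (i + k + 1) := by
  have hlow : ∑ r ∈ range i, f r = ∑ k ∈ range i, f (i + k + 1) := by
    rw [← sum_range_reflect]
    refine sum_congr rfl fun k hk => ?_
    rw [mem_range] at hk
    rw [show i - 1 - k = i - (k + 1) by omega, hf _ hk, add_assoc]
  rw [show 2 * i + 1 = i + (i + 1) by ring, sum_range_add, sum_range_succ', hlow, two_nsmul]
  simp only [add_zero, add_assoc, add_comm (f i)]

lemma sum_range_sign_mul_choose_mul_choose {R : Type*} [CommRing R] (i j : ℕ) :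
    ∑ k ∈ range (i + 1), (if k = 0 then (1 : R) else (-1) ^ k * 2) *
        (i + j).choose (i + k) * (i + j).choose (j + k) = (i + j).choose i := by
  set N := i + j
  set f : ℕ → R := fun r => (-1) ^ r * N.choose r * N.choose (2 * i - r)
  have hsq : (-1 : R) ^ i * (-1) ^ i = 1 := by
    rw [← mul_pow]
    simp
  have hupper : ∀ k ≤ i,
      (-1) ^ i * f (i + k) = (-1) ^ k * N.choose (i + k) * N.choose (j + k) := by
    intro k hk
    have : N.choose (2 * i - (i + k)) = N.choose (j + k) := by
      rw [← Nat.choose_symm (by omega : j + k ≤ N)]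
      congr 1
      omega
    simp only [f, this, pow_add]
    linear_combination ((-1) ^ k * N.choose (i + k) * N.choose (j + k) : R) * hsq
  have hsymm : ∀ k ≤ i, f (i - k) = f (i + k) := by
    intro k hk
    have hsign : (-1 : R) ^ (i + k) = (-1) ^ (i - k) := by
      rw [show i + k = i - k + 2 * k by omega, pow_add, pow_mul, neg_one_sq, one_pow, mul_one]
    simp only [f, hsign, show 2 * i - (i - k) = i + k by omega,
      show 2 * i - (i + k) = i - k by omega]
    ring
  calc ∑ k ∈ range (i + 1), (if k = 0 then (1 : R) else (-1) ^ k * 2) *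
          N.choose (i + k) * N.choose (j + k)
      = (-1) ^ i * (f i + 2 • ∑ k ∈ range i, f (i + k + 1)) := by
        rw [sum_range_succ', nsmul_eq_mul, mul_sum, mul_add, mul_sum, add_comm]
        congr 1
        · simpa using (hupper 0 i.zero_le).symm
        · refine sum_congr rfl fun k hk => ?_
          rw [mem_range] at hk
          rw [add_assoc, mul_left_comm, hupper (k + 1) hk, if_neg k.succ_ne_zero]
          push_cast
          ring
    _ = (-1) ^ i * ∑ r ∈ range (2 * i + 1), f r := by
        rw [sum_range_two_mul_add_one_of_symm f i hsymm]
    _ = N.choose i := by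
        rw [sum_range_neg_one_pow_mul_choose_mul_choose, ← mul_assoc, hsq, one_mul]

lemma choose_two_mul_mul_choose_two_mul_div {K : Type*} [Field K] [CharZero K] (i j k : ℕ) :
    ((2 * i).choose (i + k) * (2 * j).choose (j + k) : K) /
        ((2 * i).choose i * (2 * j).choose j)
      = ((i + j).choose (i + k) * (i + j).choose (j + k)) /
        ((i + j).choose i * (i + j).choose j) := by
  have hfact (m : ℕ) : (m.factorial : K) ≠ 0 := Nat.cast_ne_zero.2 m.factorial_ne_zero
  rcases le_or_gt k i with hki | hik
  · rcases le_or_gt k j with hkj | hjk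
    · rw [Nat.cast_choose K (by omega : i + k ≤ 2 * i),
        Nat.cast_choose K (by omega : j + k ≤ 2 * j),
        Nat.cast_choose K (by omega : i + k ≤ i + j),
        Nat.cast_choose K (by omega : j + k ≤ i + j),
        Nat.cast_choose K (by omega : i ≤ 2 * i), Nat.cast_choose K (by omega : j ≤ 2 * j),
        Nat.cast_choose K (by omega : i ≤ i + j), Nat.cast_choose K (by omega : j ≤ i + j),
        show 2 * i - (i + k) = i - k by omega, show 2 * j - (j + k) = j - k by omega,
        show i + j - (i + k) = j - k by omega, show i + j - (j + k) = i - k by omega,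
        show 2 * i - i = i by omega, show 2 * j - j = j by omega,
        Nat.add_sub_cancel_left, Nat.add_sub_cancel]
      field_simp
      rw [div_eq_div_iff (by simp [hfact]) (by simp [hfact])]
      ring
    · rw [Nat.choose_eq_zero_of_lt (by omega : 2 * j < j + k),
        Nat.choose_eq_zero_of_lt (by omega : i + j < i + k)]
      simp
  · rw [Nat.choose_eq_zero_of_lt (by omega : 2 * i < i + k),
      Nat.choose_eq_zero_of_lt (by omega : i + j < j + k)]
    simp

lemma sum_range_sign_mul_choose_two_mul_div {K : Type*} [Field K] [CharZero K] (i j : ℕ) :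
    ∑ k ∈ range (i + 1), (if k = 0 then (1 : K) else (-1) ^ k * 2) *
        (((2 * i).choose (i + k) * (2 * j).choose (j + k) : K) /
          ((2 * i).choose i * (2 * j).choose j))
      = 1 / (i + j).choose i := by
  have hsymm : (i + j).choose j = (i + j).choose i := Nat.choose_symm_add.symm
  simp_rw [choose_two_mul_mul_choose_two_mul_div, mul_div_assoc', ← sum_div, ← mul_assoc,
    sum_range_sign_mul_choose_mul_choose, hsymm]
  field_simp

lemma Fin.sum_univ_eq_sum_range_of_eq_zero {M : Type*} [AddCommMonoid M] (f : ℕ → M)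
    {m n : ℕ} (hmn : m ≤ n) (hf : ∀ k, m ≤ k → f k = 0) :
    ∑ k : Fin n, f k = ∑ k ∈ range m, f k := by
  rw [Fin.sum_univ_eq_sum_range]
  exact (sum_subset (range_subset_range.2 hmn) fun k _ hk => hf k (by simpa using hk)).symm

lemma Matrix.inv_diagonal_of_ne_zero {n K : Type*} [Fintype n] [DecidableEq n] [Field K]
    {v : n → K} (hv : ∀ i, v i ≠ 0) : (diagonal v)⁻¹ = diagonal fun i => (v i)⁻¹ :=
  inv_eq_right_inv (by simp [hv])

theorem reciprocalPascal_factorization (n : ℕ) :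
    (Matrix.of fun i j : Fin n => (1 : ℚ) / (Nat.choose ((i : ℕ) + (j : ℕ)) (i : ℕ))) =
    (Matrix.diagonal fun m : Fin n => ((Nat.choose (2 * (m : ℕ)) (m : ℕ) : ℚ)))⁻¹ *
      (Matrix.of fun m k : Fin n => ((Nat.choose (2 * (m : ℕ)) ((m : ℕ) + (k : ℕ)) : ℚ))) *
      (Matrix.diagonal fun m : Fin n =>
        if (m : ℕ) = 0 then (1 : ℚ) else (-1) ^ (m : ℕ) * 2) *
      Matrix.transpose
        (Matrix.of fun m k : Fin n => ((Nat.choose (2 * (m : ℕ)) ((m : ℕ) + (k : ℕ)) : ℚ))) *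
      (Matrix.diagonal fun m : Fin n => ((Nat.choose (2 * (m : ℕ)) (m : ℕ) : ℚ)))⁻¹ := by
  rw [Matrix.inv_diagonal_of_ne_zero fun m => Nat.cast_ne_zero.2 (Nat.choose_pos (by omega)).ne']
  ext i j
  rw [Matrix.mul_diagonal, Matrix.mul_apply, Matrix.of_apply,
    ← sum_range_sign_mul_choose_two_mul_div, ← Fin.sum_univ_eq_sum_range_of_eq_zero _ i.isLt,
    sum_mul]
  · simp only [Matrix.mul_diagonal, Matrix.diagonal_mul, Matrix.transpose_apply, Matrix.of_apply]
    refine sum_congr rfl fun k _ => ?_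
    ring
  · intro k hk
    rw [Nat.choose_eq_zero_of_lt (by omega : 2 * (i : ℕ) < i + k)]
    simp
end

section
/- Let L be the n×n matrix with L(m,k) = C(2m,m+k) and D the diagonal matrix with D(0,0)=1, D(m,m)=(-1)^m·2 for m>0. Then column 0 of L⁻¹ equals the diagonal of D, i.e., L⁻¹(m,0) = D(m,m) for all 0 ≤ m < n. -/
/-!
Write `d k` for the diagonal entries of `D`. By Pascal's rule the partial sums
`∑_{k ≤ r} C(2j+2, j+1+k) d k` equal `2 (-1)^r C(2j+1, j+1+r)`, which vanish once `r > j`.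
Hence `L` sends the vector `d` to the first unit vector, so `d` is the first column of `L⁻¹`.
-/

open Finset Matrix

section SignDiag

variable (R : Type*) [CommRing R]

/-- The diagonal `1, -2, 2, -2, …` of `D`. -/
def signDiag (k : ℕ) : R := if k = 0 then 1 else (-1) ^ k * 2

variable {R}

@[simp]
theorem signDiag_zero : signDiag R 0 = 1 := rfl

theorem signDiag_succ (k : ℕ) : signDiag R (k + 1) = (-1) ^ (k + 1) * 2 := rfl

theorem sum_range_choose_mul_signDiag (j r : ℕ) :
    ∑ k ∈ range (r + 1), ((2 * j + 2).choose (j + 1 + k) : R) * signDiag R k =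
      2 * (-1) ^ r * (2 * j + 1).choose (j + 1 + r) := by
  induction r with
  | zero =>
    have : (2 * j + 2).choose (j + 1) = 2 * (2 * j + 1).choose (j + 1) := by
      rw [Nat.choose_succ_succ', ← Nat.choose_symm_half]; ring
    simp [this]
  | succ r ih =>
    have pascal : (2 * j + 2).choose (j + 1 + (r + 1)) =
        (2 * j + 1).choose (j + 1 + r) + (2 * j + 1).choose (j + 1 + (r + 1)) :=
      Nat.choose_succ_succ' _ _
    rw [sum_range_succ, ih, signDiag_succ, pascal]
    push_cast
    ring

theorem sum_range_choose_two_mul_mul_signDiag {m r : ℕ} (hmr : m ≤ r) :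
    ∑ k ∈ range (r + 1), ((2 * m).choose (m + k) : R) * signDiag R k =
      if m = 0 then 1 else 0 := by
  cases m with
  | zero => simp [sum_range_succ', Nat.choose_eq_zero_of_lt]
  | succ j =>
    rw [show 2 * (j + 1) = 2 * j + 2 by ring, sum_range_choose_mul_signDiag,
      Nat.choose_eq_zero_of_lt (by omega)]
    simp

end SignDiag

theorem Matrix.inv_apply_of_mulVec_eq_single {ι R : Type*} [Fintype ι] [DecidableEq ι]
    [CommRing R] {A : Matrix ι ι R} (hA : IsUnit A.det) {v : ι → R} {j : ι}
    (h : A *ᵥ v = Pi.single j 1) (i : ι) : A⁻¹ i j = v i := by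
  have : A⁻¹ *ᵥ Pi.single j 1 = v := by
    rw [← h, mulVec_mulVec, nonsing_inv_mul A hA, one_mulVec]
  simpa using congrFun this i

section BinomialMatrix

variable (n : ℕ) (R : Type*) [CommRing R]

/-- The matrix `L`. -/
def binomialMatrix : Matrix (Fin n) (Fin n) R :=
  of fun i k => ((2 * (i : ℕ)).choose (i + k) : R)

variable {n R}

@[simp]
theorem binomialMatrix_apply (i k : Fin n) :
    binomialMatrix n R i k = ((2 * (i : ℕ)).choose (i + k) : R) := rfl

theorem binomialMatrix_isLowerTriangular : (binomialMatrix n R).IsLowerTriangular := by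
  intro i k hik
  have : (i : ℕ) < k := hik
  simp [Nat.choose_eq_zero_of_lt (show 2 * (i : ℕ) < i + k by omega)]

theorem det_binomialMatrix : (binomialMatrix n R).det = 1 := by
  rw [det_of_isLowerTriangular _ binomialMatrix_isLowerTriangular]
  refine prod_eq_one fun i _ => ?_
  simp [← two_mul]

theorem binomialMatrix_mulVec_signDiag (i : Fin n) :
    (binomialMatrix n R *ᵥ fun k => signDiag R k) i = if (i : ℕ) = 0 then 1 else 0 := by
  obtain ⟨r, rfl⟩ : ∃ r, n = r + 1 := ⟨n - 1, by have := i.pos; omega⟩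
  simp only [mulVec, dotProduct, binomialMatrix_apply]
  rw [Fin.sum_univ_eq_sum_range (fun k => ((2 * (i : ℕ)).choose (i + k) : R) * signDiag R k)]
  exact sum_range_choose_two_mul_mul_signDiag (by omega)

end BinomialMatrix

theorem L_inv_first_column_eq_diag_D (n : ℕ) :
    ∀ m : Fin n,
      (Matrix.of fun m k : Fin n =>
          ((Nat.choose (2 * (m : ℕ)) ((m : ℕ) + (k : ℕ)) : ℚ)))⁻¹ m ⟨0, m.pos⟩ =
        (if (m : ℕ) = 0 then (1 : ℚ) else (-1) ^ (m : ℕ) * 2) := by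
  intro m
  have hL : binomialMatrix n ℚ *ᵥ (fun k => signDiag ℚ k) = Pi.single ⟨0, m.pos⟩ 1 := by
    funext i
    simp [binomialMatrix_mulVec_signDiag, Pi.single_apply, Fin.ext_iff]
  exact inv_apply_of_mulVec_eq_single (by simp [det_binomialMatrix]) hL m
end

section
/- For n ≥ 1, with L the n×n matrix L(m,k)=C(2m,m+k), D⁻¹ the diagonal matrix with entries 1, -1/2, 1/2, ..., and entries L⁻¹(i,0) of the inverse of L, one has R⁻¹(0,0) = 1 + Σ_{i=1}^{n-1} (L⁻¹(i,0))² · D⁻¹(i,i), where R is the reciprocal Pascal matrix R(i,j)=1/C(i+j,i); in particular R⁻¹(0,0) is an integer. -/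
/-!
Let `W` be the matrix whose `k`-th row holds the coefficients of `(-1)ᵏ P̃ₖ`, with `P̃ₖ` the
shifted Legendre polynomial. Since `C(k+j,j) / C(i+j,i)` is a polynomial of degree `k - i` in `j`,
a `k`-th forward difference gives `(W R)(k,i) = [i = 0]` for `i ≤ k`. As `R` is symmetric this
yields `W R Wᵀ = ((-1) ^ min k l) = T D Tᵀ`, where `T` is the lower triangular matrix of ones and
`D = diag(1, -2, 2, -2, …)`; hence `R` is invertible, and the last row of `W` is the row `0` of
`R⁻¹`, so `R⁻¹(0,0) = (-1)ⁿ⁻¹`. On the other side, the alternating sums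
`∑ₖ (-1)ᵏ C(2m, m+k)` show `L⁻¹(i,0) = D(i,i)`, so each term `L⁻¹(i,0)² D⁻¹(i,i)` equals
`D(i,i)` and the right-hand side is `∑ᵢ D(i,i) = (-1)ⁿ⁻¹` as well.
-/

open Finset Matrix fwdDiff

lemma fwdDiff_iter_choose_eq_zero_of_lt {m k : ℕ} (h : m < k) :
    (Δ_[1])^[k] (fun x ↦ x.choose m : ℕ → ℤ) = 0 := by
  obtain ⟨t, rfl⟩ := Nat.exists_eq_add_of_lt h
  have hm : (Δ_[1])^[m] (fun x ↦ x.choose m : ℕ → ℤ) = fun _ ↦ 1 := by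
    simpa using fwdDiff_iter_choose 0 m
  rw [show m + t + 1 = t + 1 + m by ring, Function.iterate_add_apply, hm,
    Function.iterate_succ_apply, fwdDiff_const]
  exact Function.iterate_fixed (fwdDiff_const 1 0) t

lemma sum_neg_one_pow_mul_choose_mul_choose_add {i k : ℕ} (hik : i ≤ k) :
    ∑ j ∈ range (k + 1), (-1 : ℤ) ^ (k - j) * k.choose j * (j + k).choose (k - i) =
      if i = 0 then 1 else 0 := by
  calc _ = (Δ_[1])^[k] (fun x ↦ (x + k).choose (k - i) : ℕ → ℤ) 0 := by
        simp [fwdDiff_iter_eq_sum_shift]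
    _ = (Δ_[1])^[k] (fun x ↦ x.choose (k - i) : ℕ → ℤ) k := by
        simpa using fwdDiff_iter_comp_add 1 (fun x ↦ x.choose (k - i) : ℕ → ℤ) k k 0
    _ = if i = 0 then 1 else 0 := by
        rcases Nat.eq_zero_or_pos i with rfl | hi
        · simpa using congrFun (fwdDiff_iter_choose 0 k) k
        · rw [fwdDiff_iter_choose_eq_zero_of_lt (by omega), if_neg hi.ne']
          rfl

lemma choose_add_div_choose_add {i k : ℕ} (hik : i ≤ k) (j : ℕ) :
    ((k + j).choose j : ℚ) / (j + i).choose j = (j + k).choose (k - i) / k.choose i := by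
  rw [Nat.choose_symm_add (a := j), add_comm j i, Nat.cast_choose ℚ (Nat.le_add_left j k),
    Nat.cast_choose ℚ (Nat.le_add_right i j), Nat.cast_choose ℚ (show k - i ≤ j + k by omega),
    Nat.cast_choose ℚ hik,
    show j + k - (k - i) = i + j by omega, Nat.add_sub_cancel, Nat.add_sub_cancel_left, add_comm j]
  field_simp

lemma sum_range_neg_one_pow_mul_choose_add (p : ℕ) :
    ∑ k ∈ range (p + 2), (-1 : ℤ) ^ k * (2 * p + 2).choose (p + 1 + k) = (2 * p + 1).choose p := by
  have hpascal : ∀ k, (-1 : ℤ) ^ k * (2 * p + 2).choose (p + 1 + k) =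
      -((-1) ^ (k + 1) * (2 * p + 1).choose (p + (k + 1)) -
        (-1) ^ k * (2 * p + 1).choose (p + k)) := by
    intro k
    rw [show p + 1 + k = p + k + 1 by ring, Nat.choose_succ_succ', pow_succ]
    push_cast; ring_nf
  rw [sum_congr rfl fun k _ ↦ hpascal k, sum_neg_distrib,
    sum_range_sub (fun k ↦ (-1 : ℤ) ^ k * (2 * p + 1).choose (p + k)),
    Nat.choose_eq_zero_of_lt (show 2 * p + 1 < p + (p + 2) by omega)]
  simp

lemma Fin.sum_univ_eq_sum_range_of_eq_zero_of_lt {M : Type*} [AddCommMonoid M] {n k : ℕ}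
    (hk : k < n) (f : ℕ → M) (hf : ∀ j, k < j → f j = 0) :
    ∑ j : Fin n, f j = ∑ j ∈ range (k + 1), f j := by
  rw [Fin.sum_univ_eq_sum_range f n]
  refine (sum_subset (range_subset_range.mpr hk) fun j _ hj ↦ hf j ?_).symm
  simpa using hj

namespace Matrix

variable {n : Type*} [Fintype n] [DecidableEq n] {α : Type*} [CommRing α]

lemma inv_apply_eq_of_mulVec_eq_single {A : Matrix n n α} (hA : IsUnit A.det) {v : n → α} {i : n}
    (h : A *ᵥ v = Pi.single i 1) (j : n) : A⁻¹ j i = v j := by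
  have := congrArg (A⁻¹ *ᵥ ·) h
  simp only [mulVec_mulVec, nonsing_inv_mul _ hA, one_mulVec, mulVec_single_one] at this
  exact (congrFun this j).symm

lemma inv_apply_eq_of_vecMul_eq_single {A : Matrix n n α} (hA : IsUnit A.det) {v : n → α} {i : n}
    (h : v ᵥ* A = Pi.single i 1) (j : n) : A⁻¹ i j = v j := by
  have := congrArg (· ᵥ* A⁻¹) h
  simp only [vecMul_vecMul, mul_nonsing_inv _ hA, vecMul_one, single_one_vecMul] at this
  exact (congrFun this j).symm

end Matrix

/-- `D(m,m)`; these are the increments of `m ↦ (-1) ^ m`. -/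
def negOnePowDiff (m : ℕ) : ℚ := if m = 0 then 1 else 2 * (-1) ^ m

lemma sum_range_negOnePowDiff (t : ℕ) : ∑ m ∈ range (t + 1), negOnePowDiff m = (-1) ^ t := by
  induction t with
  | zero => simp [negOnePowDiff]
  | succ t ih =>
    rw [sum_range_succ, ih, negOnePowDiff, if_neg t.succ_ne_zero, pow_succ]
    ring

lemma negOnePowDiff_ne_zero (m : ℕ) : negOnePowDiff m ≠ 0 := by
  unfold negOnePowDiff; split_ifs <;> simp

lemma negOnePowDiff_inv {m : ℕ} (hm : m ≠ 0) : (negOnePowDiff m)⁻¹ = (-1) ^ m / 2 := by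
  rw [negOnePowDiff, if_neg hm, mul_inv, ← inv_pow, inv_neg, inv_one, div_eq_inv_mul]

lemma sum_range_choose_mul_negOnePowDiff (p : ℕ) :
    ∑ k ∈ range (p + 2), ((2 * p + 2).choose (p + 1 + k) : ℚ) * negOnePowDiff k = 0 := by
  have hd : ∀ k, negOnePowDiff k = 2 * (-1) ^ k - if k = 0 then 1 else 0 := by
    intro k; unfold negOnePowDiff; split_ifs with h <;> norm_num [h]
  have hsum := congrArg (Int.cast : ℤ → ℚ) (sum_range_neg_one_pow_mul_choose_add p)
  have hcentral : (2 * p + 2).choose (p + 1) = 2 * (2 * p + 1).choose p := by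
    rw [Nat.choose_succ_succ', Nat.choose_symm_half]; ring
  push_cast at hsum
  simp only [hd, mul_sub, sum_sub_distrib, mul_ite, mul_one, mul_zero, sum_ite_eq', mem_range]
  rw [show ∑ k ∈ range (p + 2), ((2 * p + 2).choose (p + 1 + k) : ℚ) * (2 * (-1) ^ k) =
      2 * ∑ k ∈ range (p + 2), (-1) ^ k * ((2 * p + 2).choose (p + 1 + k) : ℚ) by
    rw [mul_sum]; exact sum_congr rfl fun k _ ↦ by ring, hsum]
  simp [hcentral]

def reciprocalPascal (n : ℕ) : Matrix (Fin n) (Fin n) ℚ :=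
  of fun i j : Fin n => (1 : ℚ) / (Nat.choose ((i : ℕ) + (j : ℕ)) (i : ℕ))

/-- Row `k` holds the coefficients of `(-1) ^ k * Polynomial.shiftedLegendre k`. -/
def legendreMatrix (n : ℕ) : Matrix (Fin n) (Fin n) ℚ :=
  of fun k j : Fin n => (-1) ^ ((k : ℕ) + j) * ((k : ℕ).choose j) * (((k : ℕ) + j).choose j)

def lowerOnes (n : ℕ) : Matrix (Fin n) (Fin n) ℚ :=
  of fun k m : Fin n => if m ≤ k then 1 else 0

def centralBinomialMatrix (n : ℕ) : Matrix (Fin n) (Fin n) ℚ :=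
  of fun m k : Fin n => ((Nat.choose (2 * (m : ℕ)) ((m : ℕ) + (k : ℕ)) : ℚ))

lemma reciprocalPascal_transpose (n : ℕ) : (reciprocalPascal n)ᵀ = reciprocalPascal n := by
  ext i j
  simp [reciprocalPascal, add_comm (j : ℕ), Nat.choose_symm_add (a := (i : ℕ))]

lemma legendreMatrix_mul_reciprocalPascal_of_le {n : ℕ} {k i : Fin n} (hik : i ≤ k) :
    (legendreMatrix n * reciprocalPascal n) k i = if (i : ℕ) = 0 then 1 else 0 := by
  have hterm : ∀ j ∈ range (k + 1), (-1 : ℚ) ^ ((k : ℕ) + j) * ((k : ℕ).choose j) *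
      (((k : ℕ) + j).choose j) * (1 / ((j + i : ℕ).choose j)) =
      ((-1 : ℚ) ^ ((k : ℕ) - j) * ((k : ℕ).choose j) * ((j + k : ℕ).choose (k - i))) /
        (k : ℕ).choose i := by
    intro j hj
    have hjk : j ≤ k := Nat.lt_succ_iff.mp (mem_range.mp hj)
    have hsign : (-1 : ℚ) ^ ((k : ℕ) + j) = (-1) ^ ((k : ℕ) - j) := by
      rw [show (k : ℕ) + j = (k - j) + 2 * j by omega, pow_add, pow_mul, neg_one_sq, one_pow,
        mul_one]
    rw [hsign, mul_one_div, mul_div_assoc, choose_add_div_choose_add hik, mul_div_assoc]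
  have hcore := congrArg (Int.cast : ℤ → ℚ) (sum_neg_one_pow_mul_choose_mul_choose_add hik)
  push_cast at hcore
  rw [mul_apply]
  simp only [legendreMatrix, reciprocalPascal, of_apply]
  rw [Fin.sum_univ_eq_sum_range_of_eq_zero_of_lt k.isLt (fun j ↦ (-1 : ℚ) ^ ((k : ℕ) + j) *
      ((k : ℕ).choose j) * (((k : ℕ) + j).choose j) * (1 / ((j + i : ℕ).choose j)))
      fun j hj ↦ by simp [Nat.choose_eq_zero_of_lt hj],
    sum_congr rfl hterm, ← sum_div, hcore]
  split_ifs <;> simp_all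

lemma legendreMatrix_mul_reciprocalPascal_mul_transpose (n : ℕ) :
    legendreMatrix n * reciprocalPascal n * (legendreMatrix n)ᵀ =
      of fun k l : Fin n => (-1 : ℚ) ^ min (k : ℕ) l := by
  have hle : ∀ k l : Fin n, l ≤ k →
      (legendreMatrix n * reciprocalPascal n * (legendreMatrix n)ᵀ) k l = (-1) ^ (l : ℕ) := by
    intro k l hlk
    rw [mul_apply, Fintype.sum_eq_single ⟨0, by omega⟩]
    · rw [legendreMatrix_mul_reciprocalPascal_of_le (show ⟨0, _⟩ ≤ k from Nat.zero_le _)]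
      simp [legendreMatrix]
    · intro i hi
      rcases le_or_gt i l with hil | hli
      · rw [legendreMatrix_mul_reciprocalPascal_of_le (hil.trans hlk),
          if_neg fun h ↦ hi (Fin.ext h), zero_mul]
      · simp [legendreMatrix, Nat.choose_eq_zero_of_lt (show (l : ℕ) < i from hli)]
  have hsymm : (legendreMatrix n * reciprocalPascal n * (legendreMatrix n)ᵀ)ᵀ =
      legendreMatrix n * reciprocalPascal n * (legendreMatrix n)ᵀ := by
    rw [transpose_mul, transpose_mul, transpose_transpose, reciprocalPascal_transpose,
      Matrix.mul_assoc]
  ext k l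
  rcases le_total l k with h | h
  · rw [hle k l h, of_apply, min_eq_right (show (l : ℕ) ≤ k from h)]
  · rw [← hsymm, transpose_apply, hle l k h, of_apply, min_eq_left (show (k : ℕ) ≤ l from h)]

lemma lowerOnes_mul_diagonal_mul_transpose (n : ℕ) :
    lowerOnes n * diagonal (fun m : Fin n ↦ negOnePowDiff m) * (lowerOnes n)ᵀ =
      of fun k l : Fin n => (-1 : ℚ) ^ min (k : ℕ) l := by
  ext k l
  have hterm : ∀ m : Fin n, lowerOnes n k m * negOnePowDiff m * lowerOnes n l m =
      if (m : ℕ) ≤ min (k : ℕ) l then negOnePowDiff m else 0 := by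
    intro m
    simp only [lowerOnes, of_apply, le_min_iff, Fin.le_def]
    split_ifs <;> simp_all
  rw [mul_apply]
  simp only [mul_diagonal, transpose_apply, hterm, of_apply]
  rw [Fin.sum_univ_eq_sum_range_of_eq_zero_of_lt (lt_of_le_of_lt (min_le_left _ _) k.isLt)
      (fun m ↦ if m ≤ min (k : ℕ) l then negOnePowDiff m else 0) fun m hm ↦ if_neg hm.not_ge,
    sum_congr rfl fun m hm ↦ if_pos (Nat.lt_succ_iff.mp (mem_range.mp hm)),
    sum_range_negOnePowDiff]

lemma det_lowerOnes (n : ℕ) : (lowerOnes n).det = 1 := by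
  rw [det_of_isLowerTriangular _ fun i j (hij : i < j) ↦ ?_]
  · simp [lowerOnes]
  · simp [lowerOnes, hij.not_ge]

lemma det_reciprocalPascal_ne_zero (n : ℕ) : (reciprocalPascal n).det ≠ 0 := by
  have h := congrArg det ((legendreMatrix_mul_reciprocalPascal_mul_transpose n).trans
    (lowerOnes_mul_diagonal_mul_transpose n).symm)
  rw [det_mul, det_mul, det_mul, det_mul, det_transpose, det_transpose, det_lowerOnes,
    det_diagonal] at h
  intro hR
  rw [hR, mul_zero, zero_mul, one_mul, mul_one] at h
  exact prod_ne_zero_iff.mpr (fun (m : Fin n) _ ↦ negOnePowDiff_ne_zero m) h.symm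

lemma reciprocalPascal_inv_zero_zero (n : ℕ) : (reciprocalPascal (n + 1))⁻¹ 0 0 = (-1) ^ n := by
  have hrow : legendreMatrix (n + 1) (Fin.last n) ᵥ* reciprocalPascal (n + 1) = Pi.single 0 1 := by
    ext i
    rw [← mul_apply_eq_vecMul, legendreMatrix_mul_reciprocalPascal_of_le (Fin.le_last i)]
    simp only [Pi.single_apply, Fin.ext_iff, Fin.val_zero]
  rw [inv_apply_eq_of_vecMul_eq_single
    (isUnit_iff_ne_zero.mpr (det_reciprocalPascal_ne_zero _)) hrow]
  simp only [legendreMatrix, of_apply, Fin.val_last, Fin.val_zero, add_zero, Nat.choose_zero_right,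
    Nat.cast_one, mul_one]

lemma det_centralBinomialMatrix (n : ℕ) : (centralBinomialMatrix n).det = 1 := by
  rw [det_of_isLowerTriangular _ fun i j (hij : i < j) ↦ ?_]
  · simp [centralBinomialMatrix, ← two_mul]
  · simp [centralBinomialMatrix, Nat.choose_eq_zero_of_lt (show 2 * (i : ℕ) < i + j by omega)]

lemma centralBinomialMatrix_mulVec (n : ℕ) :
    centralBinomialMatrix (n + 1) *ᵥ (fun k ↦ negOnePowDiff k) = Pi.single 0 1 := by
  ext m
  simp only [mulVec, dotProduct, centralBinomialMatrix, of_apply]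
  rcases m with ⟨_ | p, hp⟩
  · simp [Fin.sum_univ_succ, negOnePowDiff]
  · rw [Fin.sum_univ_eq_sum_range_of_eq_zero_of_lt hp
      (fun k ↦ ((2 * (p + 1)).choose (p + 1 + k) : ℚ) * negOnePowDiff k)
      fun k hk ↦ by simp [Nat.choose_eq_zero_of_lt (show 2 * (p + 1) < p + 1 + k by omega)],
      mul_add_one, sum_range_choose_mul_negOnePowDiff]
    simp [Fin.ext_iff]

lemma centralBinomialMatrix_inv_apply_zero (n : ℕ) (i : Fin (n + 1)) :
    (centralBinomialMatrix (n + 1))⁻¹ i 0 = negOnePowDiff i :=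
  inv_apply_eq_of_mulVec_eq_single (by simp [det_centralBinomialMatrix])
    (centralBinomialMatrix_mulVec n) i

theorem R_inv_zero_zero (n : ℕ) (hn : 1 ≤ n) :
    ((Matrix.of fun i j : Fin n =>
        (1 : ℚ) / (Nat.choose ((i : ℕ) + (j : ℕ)) (i : ℕ)))⁻¹ ⟨0, hn⟩ ⟨0, hn⟩ =
      1 + ∑ i : Fin n, if (i : ℕ) = 0 then 0 else
        ((Matrix.of fun m k : Fin n =>
            ((Nat.choose (2 * (m : ℕ)) ((m : ℕ) + (k : ℕ)) : ℚ)))⁻¹ i ⟨0, hn⟩) ^ 2 *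
          ((-1 : ℚ) ^ (i : ℕ) / 2)) ∧
    ∃ z : ℤ,
      (Matrix.of fun i j : Fin n =>
        (1 : ℚ) / (Nat.choose ((i : ℕ) + (j : ℕ)) (i : ℕ)))⁻¹ ⟨0, hn⟩ ⟨0, hn⟩ = (z : ℚ) := by
  obtain ⟨m, rfl⟩ : ∃ m, n = m + 1 := ⟨n - 1, by omega⟩
  have hR := reciprocalPascal_inv_zero_zero m
  have hL := centralBinomialMatrix_inv_apply_zero m
  simp only [reciprocalPascal, centralBinomialMatrix] at hR hL
  simp only [Fin.mk_zero, hR, hL]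
  refine ⟨?_, (-1) ^ m, by push_cast; rfl⟩
  have hterm : ∀ i ∈ range (m + 1), (if i = 0 then 0 else negOnePowDiff i) =
      if i = 0 then 0 else negOnePowDiff i ^ 2 * ((-1 : ℚ) ^ i / 2) := by
    intro i _
    split_ifs with hi
    · rfl
    · rw [← negOnePowDiff_inv hi, sq, mul_assoc, mul_inv_cancel₀ (negOnePowDiff_ne_zero i),
        mul_one]
  rw [Fin.sum_univ_eq_sum_range
      (fun i ↦ if i = 0 then 0 else negOnePowDiff i ^ 2 * ((-1 : ℚ) ^ i / 2)),
    ← sum_congr rfl hterm, ← sum_range_negOnePowDiff, sum_range_succ', sum_range_succ']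
  simp [negOnePowDiff, add_comm]
end

section
/- For integers m > 0 and n ≥ 0, the super Catalan number S(m,n) = (2m)!(2n)!/(m!n!(m+n)!) is even. -/
private lemma superCatalan_key : ∀ n m : ℕ, 0 < m →
    (2 * (Nat.factorial m * Nat.factorial n * Nat.factorial (m + n))) ∣
      Nat.factorial (2 * m) * Nat.factorial (2 * n) := by
  intro n
  induction n with
  | zero =>
    intro m hm
    obtain ⟨c, hc⟩ := Nat.two_dvd_centralBinom_of_one_le hm
    have key : Nat.factorial (2 * m) = Nat.centralBinom m * Nat.factorial m * Nat.factorial m := by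
      rw [Nat.centralBinom]
      have := Nat.choose_mul_factorial_mul_factorial (show m ≤ 2 * m by omega)
      rw [show 2 * m - m = m by omega] at this
      omega
    refine ⟨c, ?_⟩
    simp only [Nat.factorial_zero, Nat.mul_zero, Nat.add_zero, key, hc]
    ring
  | succ n ih =>
    intro m hm
    obtain ⟨k, hk⟩ := ih m hm
    obtain ⟨k', hk'⟩ := ih (m + 1) (by omega)
    -- cast to ℤ
    have hkZ : ((2 * m).factorial * (2 * n).factorial : ℤ) =
        2 * (m.factorial * n.factorial * (m + n).factorial) * k := by exact_mod_cast hk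
    have hk'Z : ((2 * (m + 1)).factorial * (2 * n).factorial : ℤ) =
        2 * ((m + 1).factorial * n.factorial * (m + 1 + n).factorial) * k' := by exact_mod_cast hk'
    -- expand factorials
    have e1 : ((2 * (m + 1)).factorial : ℤ) =
        (2 * m + 2) * (2 * m + 1) * (2 * m).factorial := by
      rw [show 2 * (m + 1) = (2 * m + 1) + 1 by ring, Nat.factorial_succ, Nat.factorial_succ]
      push_cast; ring
    have e2 : ((m + 1).factorial : ℤ) = (m + 1) * m.factorial := by
      rw [Nat.factorial_succ]; push_cast; ring
    have e3 : ((m + 1 + n).factorial : ℤ) = (m + n + 1) * (m + n).factorial := by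
      rw [show m + 1 + n = (m + n) + 1 by ring, Nat.factorial_succ]; push_cast; ring
    -- derive (m+n+1) * k' = 2 * (2m+1) * k
    have fne : (2 * (m.factorial * n.factorial * (m + n).factorial) * (m + 1) : ℤ) ≠ 0 := by
      positivity
    have hrel : ((m : ℤ) + n + 1) * k' = 2 * (2 * m + 1) * k := by
      have := hk'Z
      rw [e1, e2, e3] at this
      apply mul_left_cancel₀ fne
      linear_combination (2*(m:ℤ)+2)*(2*(m:ℤ)+1)*hkZ - this
    -- conclude
    have hgoal : ((2 * m).factorial * (2 * (n + 1)).factorial : ℤ) =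
        2 * (m.factorial * (n + 1).factorial * (m + (n + 1)).factorial) * (4 * k - k') := by
      have e4 : ((2 * (n + 1)).factorial : ℤ) =
          (2 * n + 2) * (2 * n + 1) * (2 * n).factorial := by
        rw [show 2 * (n + 1) = (2 * n + 1) + 1 by ring, Nat.factorial_succ, Nat.factorial_succ]
        push_cast; ring
      have e5 : ((n + 1).factorial : ℤ) = (n + 1) * n.factorial := by
        rw [Nat.factorial_succ]; push_cast; ring
      have e6 : ((m + (n + 1)).factorial : ℤ) = (m + n + 1) * (m + n).factorial := by
        rw [show m + (n + 1) = (m + n) + 1 by ring, Nat.factorial_succ]; push_cast; ring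
      rw [e4, e5, e6]
      linear_combination (2*(n:ℤ)+2)*(2*(n:ℤ)+1)*hkZ +
        2*((m.factorial:ℤ)*(n.factorial:ℤ)*((m+n).factorial:ℤ))*((n:ℤ)+1)*hrel
    -- ℤ dvd back to ℕ
    have hnn : (0 : ℤ) ≤ 4 * k - k' := by
      by_contra h
      push_neg at h
      have hpos : (0 : ℤ) < 2 * (m.factorial * (n + 1).factorial * (m + (n + 1)).factorial) := by
        positivity
      have : ((2 * m).factorial * (2 * (n + 1)).factorial : ℤ) < 0 := by
        rw [hgoal]; exact mul_neg_of_pos_of_neg hpos (by linarith)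
      have : (0 : ℤ) ≤ ((2 * m).factorial * (2 * (n + 1)).factorial : ℤ) := by positivity
      linarith
    obtain ⟨c, hc⟩ := Int.eq_ofNat_of_zero_le hnn
    refine ⟨c, ?_⟩
    have := hgoal
    rw [hc] at this
    exact_mod_cast this

theorem superCatalan_even (m n : ℕ) (hm : 0 < m) :
    (2 * (Nat.factorial m * Nat.factorial n * Nat.factorial (m + n))) ∣
      Nat.factorial (2 * m) * Nat.factorial (2 * n) := by
  exact superCatalan_key n m hm
end

section
/- For all nonnegative integers i and j, C(2i,i)·C(2j,j) is divisible by C(i+j,i); equivalently, C(i+j,i) divides C(2i,i)·C(2j,j) in ℤ. -/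
/-!
Multiplying through by `(i! j!)²`, the claim becomes `(i+j)! i! j! ∣ (2i)! (2j)!`. By Legendre's
formula it suffices that `⌊(i+j)/q⌋ + ⌊i/q⌋ + ⌊j/q⌋ ≤ ⌊2i/q⌋ + ⌊2j/q⌋` for every `q > 0`
(Landau's criterion), and this holds because a carry in `(i mod q) + (j mod q)` forces
`2 (i mod q) ≥ q` or `2 (j mod q) ≥ q`.
-/

open Nat Finset

theorem Nat.add_div_add_div_add_div_le (a b q : ℕ) :
    (a + b) / q + a / q + b / q ≤ 2 * a / q + 2 * b / q := by
  rcases q.eq_zero_or_pos with rfl | hq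
  · simp
  rw [two_mul, two_mul, Nat.add_div hq, Nat.add_div hq, Nat.add_div hq]
  split_ifs <;> omega

theorem Nat.prod_factorial_dvd_prod_factorial {ι κ : Type*} (s : Finset ι) (t : Finset κ)
    (a : ι → ℕ) (b : κ → ℕ) (h : ∀ q, 0 < q → ∑ i ∈ s, a i / q ≤ ∑ j ∈ t, b j / q) :
    ∏ i ∈ s, (a i)! ∣ ∏ j ∈ t, (b j)! := by
  rw [← factorization_le_iff_dvd (prod_ne_zero_iff.mpr fun _ _ => factorial_ne_zero _)
    (prod_ne_zero_iff.mpr fun _ _ => factorial_ne_zero _)]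
  intro p
  by_cases hp : p.Prime
  swap
  · simp [factorization_eq_zero_of_not_prime _ hp]
  set N := ∑ i ∈ s, a i + ∑ j ∈ t, b j
  have legendre {n : ℕ} (hn : n ≤ N) :
      (n)!.factorization p = ∑ k ∈ Ico 1 (N + 1), n / p ^ k :=
    factorization_factorial hp (lt_succ_of_le ((log_le_self p n).trans hn))
  have ha {i : ι} (hi : i ∈ s) : a i ≤ N :=
    (single_le_sum (fun _ _ => zero_le _) hi).trans (le_add_right _ _)
  have hb {j : κ} (hj : j ∈ t) : b j ≤ N :=
    (single_le_sum (fun _ _ => zero_le _) hj).trans (le_add_left _ _)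
  rw [factorization_prod_apply fun _ _ => factorial_ne_zero _,
    factorization_prod_apply fun _ _ => factorial_ne_zero _,
    sum_congr rfl fun i hi => legendre (ha hi), sum_congr rfl fun j hj => legendre (hb hj),
    sum_comm, sum_comm (s := t)]
  exact sum_le_sum fun k _ => h _ (pow_pos hp.pos k)

theorem choose_dvd_centralBinom_mul (i j : ℕ) :
    Nat.choose (i + j) i ∣ Nat.choose (2 * i) i * Nat.choose (2 * j) j := by
  have hfact : (i + j)! * i ! * j ! ∣ (2 * i)! * (2 * j)! := by
    simpa [Fin.prod_univ_three, mul_assoc] using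
      prod_factorial_dvd_prod_factorial univ univ ![i + j, i, j] ![2 * i, 2 * j] fun q _ => by
        simpa [Fin.sum_univ_three] using add_div_add_div_add_div_le i j q
  rw [← add_choose_mul_factorial_mul_factorial i j, two_mul, two_mul,
    ← add_choose_mul_factorial_mul_factorial i i, ← add_choose_mul_factorial_mul_factorial j j]
    at hfact
  rw [choose_symm_add, two_mul, two_mul]
  refine (Nat.mul_dvd_mul_iff_right (by positivity : 0 < i ! * j ! * (i ! * j !))).mp ?_
  convert hfact using 1 <;> ring
end
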